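/- Fix an integer M ≥ 2, layer sizes H_0, …, H_M ≥ 1, inputs X₁, …, X_n ∈ ℝ^N with at least one X_k nonzero, and targets Y₁, …, Y_n ∈ ℝ^{N'}. Let L_n(w) = (1/n) Σ_i ‖Y_i − f(X_i; w)‖², and for constants n, β > 0, γ > 0 and fixed w_μ ∈ ℝ^d define log π(w) = −nβ L_n(w) − (γ/2)‖w − w_μ‖² (up to an additive constant). Then there is no twice continuously differentiable function V : ℝ^d → [1, ∞) with globally bounded second derivatives and no constant C > 0 such that ‖∇V(w)‖² + ‖∇log π(w)‖² ≤ C V(w) for all w ∈ ℝ^d. -/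

import Mathlib

/-!
Let `u` be the parameter whose layers are the matrix units `E₀ⱼ₀, E₀₀, …, E₀₀`, where
`X k j₀ ≠ 0`. Along the ray `t ↦ t • u` the network is `t ^ M • E₀ⱼ₀`, so
`log π (t • u) ≤ -β (Y k 0 - t ^ M X k j₀)²`, which decays like `-t ^ (2M)`.
On the other hand `‖∇V‖² ≤ C V` makes `√V` Lipschitz with constant `√C / 2`, so `√V` and hence
`‖∇ log π‖ ≤ √(C V)` grow at most linearly, and `log π` is bounded below by a quadratic.
As `2M > 2`, the two bounds are incompatible.
-/

/-- The end-to-end matrix `W_M ⋯ W_1` of a deep linear network with layer sizes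
`H 0, H 1, …` and weight matrices `w l : Matrix (Fin (H (l+1))) (Fin (H l)) ℝ`. -/
def dlnProd (H : ℕ → ℕ) (w : ∀ l : ℕ, Matrix (Fin (H (l + 1))) (Fin (H l)) ℝ) :
    (M : ℕ) → Matrix (Fin (H M)) (Fin (H 0)) ℝ
  | 0 => 1
  | M + 1 => w M * dlnProd H w M

/-- Index type for the `d = Σ_{l=1}^M H_l H_{l-1}` matrix entries of the parameter
`w = (W_1, …, W_M)`, so that the parameter space is `ℝ^d = EuclideanSpace ℝ (DlnVars H M)`. -/
abbrev DlnVars (H : ℕ → ℕ) (M : ℕ) := (l : Fin M) × (Fin (H (l.1 + 1)) × Fin (H l.1))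

/-- Reassemble a parameter vector `w ∈ ℝ^d` into the tuple of weight matrices. -/
def dlnToMats (M : ℕ) (H : ℕ → ℕ) (w : DlnVars H M → ℝ) :
    ∀ l : ℕ, Matrix (Fin (H (l + 1))) (Fin (H l)) ℝ :=
  fun l => Matrix.of fun i j => if h : l < M then w ⟨⟨l, h⟩, (i, j)⟩ else 0

/-- The empirical loss `L_n(w) = (1/n) Σ_k ‖Y_k − f(X_k; w)‖²` of a deep linear
network, as a function on the parameter space `ℝ^d`. -/
noncomputable def dlnEmpLoss (M : ℕ) (H : ℕ → ℕ) (n : ℕ)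
    (X : Fin n → Fin (H 0) → ℝ) (Y : Fin n → Fin (H M) → ℝ)
    (w : EuclideanSpace ℝ (DlnVars H M)) : ℝ :=
  (1 / (n : ℝ)) * ∑ k : Fin n, ∑ i : Fin (H M),
    (Y k i - (dlnProd H (dlnToMats M H (fun v => w v)) M).mulVec (X k) i) ^ 2

/-- The log tempered posterior (up to an additive constant)
`log π(w) = −nβ L_n(w) − (γ/2)‖w − w_μ‖²` with Gaussian localization prior. -/
noncomputable def dlnLogPost (M : ℕ) (H : ℕ → ℕ) (n : ℕ)
    (X : Fin n → Fin (H 0) → ℝ) (Y : Fin n → Fin (H M) → ℝ) (β γ : ℝ)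
    (wμ : EuclideanSpace ℝ (DlnVars H M)) (w : EuclideanSpace ℝ (DlnVars H M)) : ℝ :=
  -((n : ℝ) * β) * dlnEmpLoss M H n X Y w - (γ / 2) * ‖w - wμ‖ ^ 2

section
variable {E : Type*} [NormedAddCommGroup E] [InnerProductSpace ℝ E] [CompleteSpace E]

theorem norm_fderiv_eq_norm_gradient (f : E → ℝ) (x : E) :
    ‖fderiv ℝ f x‖ = ‖gradient f x‖ := by
  rw [← toDual_gradient, LinearIsometryEquiv.norm_map]

theorem le_sqrt_mul_sqrt_of_sq_le {a b c : ℝ} (hc : 0 ≤ c) (h : a ^ 2 ≤ b * c) :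
    a ≤ √b * √c := by
  rw [← Real.sqrt_mul' b hc]
  exact Real.le_sqrt_of_sq_le h

theorem sqrt_le_sqrt_add_of_norm_gradient_sq_le {V : E → ℝ} {C : ℝ} (hV : Differentiable ℝ V)
    (hpos : ∀ w, 0 < V w) (h : ∀ w, ‖gradient V w‖ ^ 2 ≤ C * V w) (x y : E) :
    √(V y) ≤ √(V x) + √C / 2 * ‖y - x‖ := by
  have hderiv : ∀ w, HasFDerivAt (fun w => √(V w)) ((1 / (2 * √(V w))) • fderiv ℝ V w) w :=
    fun w => (hV w).hasFDerivAt.sqrt (hpos w).ne'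
  have hbound : ∀ w, ‖(1 / (2 * √(V w))) • fderiv ℝ V w‖ ≤ √C / 2 := by
    intro w
    have hsqrt : 0 < √(V w) := Real.sqrt_pos.mpr (hpos w)
    have hgrad : ‖fderiv ℝ V w‖ ≤ √C * √(V w) := by
      rw [norm_fderiv_eq_norm_gradient]
      exact le_sqrt_mul_sqrt_of_sq_le (hpos w).le (h w)
    rw [norm_smul, Real.norm_of_nonneg (by positivity)]
    calc 1 / (2 * √(V w)) * ‖fderiv ℝ V w‖ ≤ 1 / (2 * √(V w)) * (√C * √(V w)) := by gcongr
      _ = √C / 2 := by field_simp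
  have := convex_univ.norm_image_sub_le_of_norm_hasFDerivWithin_le
    (fun w _ => (hderiv w).hasFDerivWithinAt) (fun w _ => hbound w) (Set.mem_univ x)
    (Set.mem_univ y)
  rw [Real.norm_eq_abs] at this
  linarith [le_abs_self (√(V y) - √(V x))]

theorem abs_sub_le_of_norm_gradient_sq_add_le {V F : E → ℝ} {C : ℝ} (hV : Differentiable ℝ V)
    (hF : Differentiable ℝ F) (hpos : ∀ w, 0 < V w)
    (h : ∀ w, ‖gradient V w‖ ^ 2 + ‖gradient F w‖ ^ 2 ≤ C * V w) (x y : E) :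
    |F y - F x| ≤ √C * (√(V x) + √C / 2 * ‖y - x‖) * ‖y - x‖ := by
  have hsqrtV : ∀ z, √(V z) ≤ √(V x) + √C / 2 * ‖z - x‖ :=
    sqrt_le_sqrt_add_of_norm_gradient_sq_le hV hpos
      (fun w => by nlinarith [h w, sq_nonneg ‖gradient F w‖]) x
  have hbound : ∀ z ∈ Metric.closedBall x ‖y - x‖,
      ‖fderiv ℝ F z‖ ≤ √C * (√(V x) + √C / 2 * ‖y - x‖) := by
    intro z hz
    rw [mem_closedBall_iff_norm] at hz
    calc ‖fderiv ℝ F z‖ ≤ √C * √(V z) := by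
          rw [norm_fderiv_eq_norm_gradient]
          exact le_sqrt_mul_sqrt_of_sq_le (hpos z).le
            (by nlinarith [h z, sq_nonneg ‖gradient V z‖])
      _ ≤ √C * (√(V x) + √C / 2 * ‖y - x‖) := by
          gcongr
          exact (hsqrtV z).trans (by gcongr)
  have := (convex_closedBall x ‖y - x‖).norm_image_sub_le_of_norm_fderiv_le
    (fun z _ => hF z) hbound (Metric.mem_closedBall_self (norm_nonneg _))
    (mem_closedBall_iff_norm.mpr le_rfl)
  rwa [Real.norm_eq_abs] at this

end

theorem exists_quadratic_lt_mul_sq_sub_pow_mul {M : ℕ} (hM : 2 ≤ M) {β x : ℝ} (hβ : 0 < β)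
    (hx : x ≠ 0) (a b c y : ℝ) :
    ∃ t : ℝ, 0 ≤ t ∧ a + b * t + c * t ^ 2 < β * (y - t ^ M * x) ^ 2 := by
  set A := |a| + |b| + |c|
  set s := √(A / β) + 1
  have hs : A < β * s ^ 2 := by
    have hA : A = β * √(A / β) ^ 2 := by
      rw [Real.sq_sqrt (by positivity)]; field_simp
    nlinarith [Real.sqrt_nonneg (A / β)]
  set t := max 1 ((|y| + s) / |x|)
  have ht1 : 1 ≤ t := le_max_left _ _
  have hts : |y| + s ≤ t * |x| := (div_le_iff₀ (abs_pos.mpr hx)).mp (le_max_right _ _)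
  have ht0 : 0 ≤ t := zero_le_one.trans ht1
  have hquad : a + b * t + c * t ^ 2 ≤ A * t ^ 2 := by
    have htt : t ≤ t ^ 2 := by nlinarith
    have ha : a ≤ |a| * t ^ 2 :=
      (le_abs_self a).trans (le_mul_of_one_le_right (abs_nonneg a) (one_le_pow₀ ht1))
    have hb : b * t ≤ |b| * t ^ 2 :=
      (mul_le_mul_of_nonneg_right (le_abs_self b) ht0).trans
        (mul_le_mul_of_nonneg_left htt (abs_nonneg b))
    have hc : c * t ^ 2 ≤ |c| * t ^ 2 := mul_le_mul_of_nonneg_right (le_abs_self c) (by positivity)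
    linarith
  have hgrow : s * t ≤ |y - t ^ M * x| := by
    have htM : t ^ 2 ≤ t ^ M := pow_le_pow_right₀ ht1 hM
    calc s * t ≤ t ^ 2 * |x| - |y| := by nlinarith [abs_nonneg y]
      _ ≤ t ^ M * |x| - |y| := by gcongr
      _ = |t ^ M * x| - |y| := by rw [abs_mul, abs_of_nonneg (pow_nonneg ht0 M)]
      _ ≤ |y - t ^ M * x| := by rw [abs_sub_comm]; exact abs_sub_abs_le_abs_sub _ _
  refine ⟨t, ht0, ?_⟩
  calc a + b * t + c * t ^ 2 ≤ A * t ^ 2 := hquad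
    _ < β * s ^ 2 * t ^ 2 := by gcongr
    _ = β * (s * t) ^ 2 := by ring
    _ ≤ β * (y - t ^ M * x) ^ 2 := by
        rw [← sq_abs (y - _)]; gcongr

theorem differentiable_dlnProd_apply (M : ℕ) (H : ℕ → ℕ) (m : ℕ) (i : Fin (H m))
    (j : Fin (H 0)) :
    Differentiable ℝ (fun w : EuclideanSpace ℝ (DlnVars H M) =>
      dlnProd H (dlnToMats M H (fun v => w v)) m i j) := by
  induction m with
  | zero => exact differentiable_const _
  | succ m ih =>
    simp only [dlnProd, Matrix.mul_apply, dlnToMats, Matrix.of_apply]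
    refine Differentiable.fun_sum fun p _ => Differentiable.mul ?_ (ih p)
    split_ifs <;> fun_prop

theorem differentiable_dlnLogPost (M : ℕ) (H : ℕ → ℕ) (n : ℕ)
    (X : Fin n → Fin (H 0) → ℝ) (Y : Fin n → Fin (H M) → ℝ) (β γ : ℝ)
    (wμ : EuclideanSpace ℝ (DlnVars H M)) :
    Differentiable ℝ (dlnLogPost M H n X Y β γ wμ) := by
  have := differentiable_dlnProd_apply M H M
  unfold dlnLogPost dlnEmpLoss
  simp only [Matrix.mulVec, dotProduct]
  exact (by fun_prop : Differentiable ℝ _).sub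
    (((differentiable_id.sub_const wμ).norm_sq ℝ).const_mul _)

theorem dlnLogPost_le_neg_mul_sq_residual {M : ℕ} {H : ℕ → ℕ} {n : ℕ} (hn : 0 < n)
    (X : Fin n → Fin (H 0) → ℝ) (Y : Fin n → Fin (H M) → ℝ) {β γ : ℝ} (hβ : 0 ≤ β)
    (hγ : 0 ≤ γ) (wμ w : EuclideanSpace ℝ (DlnVars H M)) (k : Fin n) (i : Fin (H M)) :
    dlnLogPost M H n X Y β γ wμ w
      ≤ -(β * (Y k i - (dlnProd H (dlnToMats M H (fun v => w v)) M).mulVec (X k) i) ^ 2) := by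
  set r := fun k i => (Y k i - (dlnProd H (dlnToMats M H (fun v => w v)) M).mulVec (X k) i) ^ 2
  have hr : ∀ k i, 0 ≤ r k i := fun _ _ => sq_nonneg _
  have hsingle : r k i ≤ ∑ k, ∑ i, r k i :=
    (Finset.single_le_sum (f := r k) (fun i _ => hr k i) (Finset.mem_univ i)).trans
      (Finset.single_le_sum (f := fun k => ∑ i, r k i)
        (fun k _ => Finset.sum_nonneg fun i _ => hr k i) (Finset.mem_univ k))
  have hn' : (n : ℝ) ≠ 0 := by positivity
  have hprior : 0 ≤ γ / 2 * ‖w - wμ‖ ^ 2 := by positivity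
  have hloss : -((n : ℝ) * β) * dlnEmpLoss M H n X Y w = -(β * ∑ k, ∑ i, r k i) := by
    simp only [dlnEmpLoss, r]; field_simp
  rw [dlnLogPost, hloss]
  nlinarith [mul_le_mul_of_nonneg_left hsingle hβ]

def dlnDir (M : ℕ) (H : ℕ → ℕ) (j₀ : Fin (H 0)) : EuclideanSpace ℝ (DlnVars H M) :=
  WithLp.toLp 2 fun v =>
    if v.2.1.1 = 0 ∧ v.2.2.1 = (if v.1.1 = 0 then (j₀ : ℕ) else 0) then 1 else 0

theorem dlnToMats_smul_dlnDir_zero {M : ℕ} {H : ℕ → ℕ} (hM : 0 < M) (h1 : 0 < H 1)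
    (j₀ : Fin (H 0)) (t : ℝ) :
    dlnToMats M H (fun v => (t • dlnDir M H j₀) v) 0 = Matrix.single ⟨0, h1⟩ j₀ t := by
  ext i j
  simp [dlnToMats, dlnDir, hM, Matrix.single_apply, Fin.ext_iff, eq_comm]

theorem dlnToMats_smul_dlnDir_of_pos {M : ℕ} {H : ℕ → ℕ} {m : ℕ} (hm : 0 < m) (hmM : m < M)
    (hm0 : 0 < H m) (hm1 : 0 < H (m + 1)) (j₀ : Fin (H 0)) (t : ℝ) :
    dlnToMats M H (fun v => (t • dlnDir M H j₀) v) m = Matrix.single ⟨0, hm1⟩ ⟨0, hm0⟩ t := by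
  ext i j
  simp [dlnToMats, dlnDir, hmM, hm.ne', Matrix.single_apply, Fin.ext_iff, eq_comm]

theorem dlnProd_smul_dlnDir {M : ℕ} {H : ℕ → ℕ} (hH : ∀ l ≤ M, 1 ≤ H l) (j₀ : Fin (H 0))
    (t : ℝ) {m : ℕ} (hm : 1 ≤ m) (hmM : m ≤ M) :
    dlnProd H (dlnToMats M H (fun v => (t • dlnDir M H j₀) v)) m
      = Matrix.single ⟨0, hH m hmM⟩ j₀ (t ^ m) := by
  induction m, hm using Nat.le_induction with
  | base =>
    rw [dlnProd, dlnProd, Matrix.mul_one, dlnToMats_smul_dlnDir_zero hmM, pow_one]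
  | succ m hm ih =>
    rw [dlnProd, ih (by omega), dlnToMats_smul_dlnDir_of_pos hm hmM (hH m (by omega)),
      Matrix.single_mul_single_same, pow_succ']

theorem dlnLogPost_smul_dlnDir_le {M : ℕ} (hM : 1 ≤ M) {H : ℕ → ℕ} (hH : ∀ l ≤ M, 1 ≤ H l)
    {n : ℕ} (hn : 0 < n) (X : Fin n → Fin (H 0) → ℝ) (Y : Fin n → Fin (H M) → ℝ) {β γ : ℝ}
    (hβ : 0 ≤ β) (hγ : 0 ≤ γ) (wμ : EuclideanSpace ℝ (DlnVars H M)) (k : Fin n)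
    (j₀ : Fin (H 0)) (t : ℝ) :
    dlnLogPost M H n X Y β γ wμ (t • dlnDir M H j₀)
      ≤ -(β * (Y k ⟨0, hH M le_rfl⟩ - t ^ M * X k j₀) ^ 2) := by
  have h := dlnLogPost_le_neg_mul_sq_residual hn X Y hβ hγ wμ (t • dlnDir M H j₀) k
    ⟨0, hH M le_rfl⟩
  rwa [dlnProd_smul_dlnDir hH j₀ t hM le_rfl, Matrix.single_mulVec,
    Function.update_self] at h

/-- for a deep linear network with `M ≥ 2` layers (and some nonzero
input), there is no twice continuously differentiable Lyapunov function
`V : ℝ^d → [1, ∞)` with globally bounded second derivatives and constant `C > 0`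
such that `‖∇V(w)‖² + ‖∇log π(w)‖² ≤ C V(w)` for all `w`. -/
theorem dln_logPost_no_lyapunov_function
    (M : ℕ) (hM : 2 ≤ M) (H : ℕ → ℕ) (hH : ∀ l ≤ M, 1 ≤ H l)
    (n : ℕ) (hn : 0 < n) (β γ : ℝ) (hβ : 0 < β) (hγ : 0 < γ)
    (X : Fin n → Fin (H 0) → ℝ) (hX : ∃ k, X k ≠ 0)
    (Y : Fin n → Fin (H M) → ℝ)
    (wμ : EuclideanSpace ℝ (DlnVars H M)) :
    ¬ ∃ (V : EuclideanSpace ℝ (DlnVars H M) → ℝ) (C K : ℝ),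
        ContDiff ℝ 2 V
        ∧ (∀ w, 1 ≤ V w)
        ∧ (∀ w, ‖iteratedFDeriv ℝ 2 V w‖ ≤ K)
        ∧ 0 < C
        ∧ ∀ w, ‖gradient V w‖ ^ 2
            + ‖gradient (dlnLogPost M H n X Y β γ wμ) w‖ ^ 2 ≤ C * V w := by
  rintro ⟨V, C, K, hV, hV1, -, hC, hIneq⟩
  obtain ⟨k, hk⟩ := hX
  obtain ⟨j₀, hj₀⟩ := Function.ne_iff.mp hk
  set F := dlnLogPost M H n X Y β γ wμ
  set u := dlnDir M H j₀
  obtain ⟨t, ht0, hlt⟩ := exists_quadratic_lt_mul_sq_sub_pow_mul hM hβ hj₀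
    (-F 0) (√C * √(V 0) * ‖u‖) (C / 2 * ‖u‖ ^ 2) (Y k ⟨0, hH M le_rfl⟩)
  have hray : F (t • u) ≤ -(β * (Y k ⟨0, hH M le_rfl⟩ - t ^ M * X k j₀) ^ 2) :=
    dlnLogPost_smul_dlnDir_le (by omega) hH hn X Y hβ.le hγ.le wμ k j₀ t
  have hgrowth := abs_sub_le_of_norm_gradient_sq_add_le (hV.differentiable (by norm_num))
    (differentiable_dlnLogPost M H n X Y β γ wμ) (fun w => zero_lt_one.trans_le (hV1 w))
    hIneq 0 (t • u)
  have hquad : √C * (√(V 0) + √C / 2 * ‖t • u - 0‖) * ‖t • u - 0‖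
      = √C * √(V 0) * ‖u‖ * t + C / 2 * ‖u‖ ^ 2 * t ^ 2 := by
    rw [sub_zero, norm_smul, Real.norm_of_nonneg ht0]
    linear_combination t ^ 2 * ‖u‖ ^ 2 / 2 * Real.mul_self_sqrt hC.le
  linarith [neg_abs_le (F (t • u) - F 0)]
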